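/- arXiv:math/0606001 — 3 statements merged into one kernel-verified Lean document; each statement's English description precedes it below -/
import Mathlib

section
/- Let K be a non-archimedean valuation field, q ∈ Kˣ a unit with ‖q‖ = 1, d a natural number, and φ : (Fin d → ℤ) → (Fin d → ℤ) → ℤ a skew-symmetric biadditive form (φ(λ,μ) = −φ(μ,λ), additive in each argument). Let r : Fin d → ℝ with r(i) > 0 for all i. On the twisted group algebra A_q(T(L,φ)) of regular functions on the quantum torus — finitely supported functions a : (Fin d → ℤ) →₀ K with product (a·b)(κ) = Σ_{λ+μ=κ} q^{φ(λ,μ)}·a(λ)·b(μ) (the sum is finite), corresponding to the relations e(λ)e(μ) = q^{φ(λ,μ)} e(λ+μ) on the basis elements e(λ) — define the norm ν_r(a) = sup over λ in the support of a of ‖a(λ)‖·∏ᵢ r(i)^{λ(i)}. Then ν_r is multiplicative: ν_r(a·b) = ν_r(a)·ν_r(b) for all a, b. -/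
/-!
Order the lattice lexicographically; this order is translation invariant. For `a ≠ 0`, among the
indices where the weighted norm `‖a x‖ r^x` attains `ν_r(a)` take the lexicographically largest
`x₀`, and likewise `y₀` for `b`. In the coefficient of `a b` at `x₀ + y₀`, the term coming from
`(x₀, y₀)` has weighted norm `ν_r(a) ν_r(b)`, while for every other `x` either `x > x₀` (so `a` is
strictly below its sup at `x`) or `x < x₀` (so `x₀ + y₀ - x > y₀` and `b` is strictly below its sup
there). Since `‖q‖ = 1`, the twist does not change norms, and in an ultrametric field a strictly
dominant term determines the norm of a sum. The reverse inequality is the ultrametric inequality.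
-/

open Finset

lemma IsUltrametricDist.norm_sum_eq_of_forall_ne_norm_lt {ι M : Type*}
    [SeminormedAddCommGroup M] [IsUltrametricDist M] {s : Finset ι} {f : ι → M} {i : ι}
    (hi : i ∈ s) (h : ∀ j ∈ s, j ≠ i → ‖f j‖ < ‖f i‖) : ‖∑ j ∈ s, f j‖ = ‖f i‖ := by
  classical
  rw [← add_sum_erase s f hi]
  rcases (s.erase i).eq_empty_or_nonempty with hempty | hne
  · simp [hempty]
  obtain ⟨j, hj, hle⟩ := exists_norm_finsetSum_le_of_nonempty hne f
  have hlt : ‖∑ j ∈ s.erase i, f j‖ < ‖f i‖ :=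
    hle.trans_lt (h j (mem_of_mem_erase hj) (ne_of_mem_erase hj))
  rw [norm_add_eq_max_of_norm_ne_norm hlt.ne', max_eq_left hlt.le]

section WeightedSupNorm

variable {Γ K : Type*} [NormedField K]

noncomputable def weightedSupNorm (w : Γ → ℝ) (a : Γ → K) : ℝ :=
  ⨆ x, ‖a x‖ * w x

@[simp]
lemma weightedSupNorm_zero (w : Γ → ℝ) : weightedSupNorm w (0 : Γ → K) = 0 := by
  simp [weightedSupNorm]

lemma bddAbove_range_norm_mul_weight (w : Γ → ℝ) (a : Γ →₀ K) :
    BddAbove (Set.range fun x => ‖a x‖ * w x) := by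
  classical
  refine (((a.support.image fun x => ‖a x‖ * w x).finite_toSet.insert 0).subset ?_).bddAbove
  rintro _ ⟨x, rfl⟩
  by_cases hx : a x = 0
  · simp [hx]
  · exact Set.mem_insert_of_mem _ (mem_image_of_mem _ (Finsupp.mem_support_iff.2 hx))

lemma norm_mul_weight_le_weightedSupNorm (w : Γ → ℝ) (a : Γ →₀ K) (x : Γ) :
    ‖a x‖ * w x ≤ weightedSupNorm w a :=
  le_ciSup (bddAbove_range_norm_mul_weight w a) x

lemma weightedSupNorm_nonneg {w : Γ → ℝ} (hw : ∀ x, 0 < w x) (a : Γ →₀ K) :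
    0 ≤ weightedSupNorm w a :=
  Real.iSup_nonneg fun x => mul_nonneg (norm_nonneg _) (hw x).le

lemma exists_greatest_index_attaining_weightedSupNorm [LinearOrder Γ] {w : Γ → ℝ}
    (hw : ∀ x, 0 < w x) {a : Γ →₀ K} (ha : a ≠ 0) :
    ∃ x₀, a x₀ ≠ 0 ∧ ‖a x₀‖ * w x₀ = weightedSupNorm w a ∧
      ∀ x, x₀ < x → ‖a x‖ * w x < weightedSupNorm w a := by
  set f : Γ → ℝ := fun x => ‖a x‖ * w x
  obtain ⟨x₀, hx₀, hmax⟩ := a.support.exists_max_image (fun x => toLex (f x, x))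
    (Finsupp.support_nonempty_iff.2 ha)
  have hpos : 0 < f x₀ := mul_pos (norm_pos_iff.2 (Finsupp.mem_support_iff.1 hx₀)) (hw x₀)
  have hlex : ∀ x, f x < f x₀ ∨ f x = f x₀ ∧ x ≤ x₀ := fun x => by
    by_cases hx : x ∈ a.support
    · exact Prod.Lex.le_iff.1 (hmax x hx)
    · simp [f, Finsupp.notMem_support_iff.1 hx, hpos]
  have hsup : weightedSupNorm w a = f x₀ :=
    le_antisymm (Real.iSup_le (fun x => (hlex x).elim le_of_lt fun h => h.1.le) hpos.le)
      (norm_mul_weight_le_weightedSupNorm w a x₀)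
  refine ⟨x₀, Finsupp.mem_support_iff.1 hx₀, hsup.symm, fun x hx => hsup ▸ ?_⟩
  exact (hlex x).resolve_right fun h => hx.not_ge h.2

end WeightedSupNorm

section TwistedConvolution

variable {Γ K : Type*} [AddCommGroup Γ] [NormedField K]
  {w : Γ → ℝ} {t : Γ → Γ → K} {a b : Γ →₀ K} {c : Γ → K}

lemma norm_twistedTerm_mul_weight (hw_add : ∀ x y, w (x + y) = w x * w y)
    (ht : ∀ x y, ‖t x y‖ = 1) (κ x : Γ) :
    ‖t x (κ - x) * a x * b (κ - x)‖ * w κ = (‖a x‖ * w x) * (‖b (κ - x)‖ * w (κ - x)) := by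
  rw [norm_mul, norm_mul, ht, one_mul, mul_mul_mul_comm, ← hw_add, add_sub_cancel]

variable [IsUltrametricDist K] (hw : ∀ x, 0 < w x) (hw_add : ∀ x y, w (x + y) = w x * w y)
  (ht : ∀ x y, ‖t x y‖ = 1)
  (hc : ∀ κ, c κ = ∑ x ∈ a.support, t x (κ - x) * a x * b (κ - x))
include hw hw_add ht hc

lemma norm_twistedConv_mul_weight_le (κ : Γ) :
    ‖c κ‖ * w κ ≤ weightedSupNorm w a * weightedSupNorm w b := by
  have hνa := weightedSupNorm_nonneg hw a
  have hνb := weightedSupNorm_nonneg hw b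
  rw [hc κ, ← le_div_iff₀ (hw κ)]
  refine IsUltrametricDist.norm_sum_le_of_forall_le_of_nonneg
    (div_nonneg (mul_nonneg hνa hνb) (hw κ).le) fun x _ => ?_
  rw [le_div_iff₀ (hw κ), norm_twistedTerm_mul_weight hw_add ht]
  exact mul_le_mul (norm_mul_weight_le_weightedSupNorm w a x)
    (norm_mul_weight_le_weightedSupNorm w b _) (mul_nonneg (norm_nonneg _) (hw _).le) hνa

lemma exists_weightedSupNorm_mul_le_norm_twistedConv_mul_weight
    [LinearOrder Γ] [IsOrderedAddMonoid Γ] :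
    ∃ κ, weightedSupNorm w a * weightedSupNorm w b ≤ ‖c κ‖ * w κ := by
  by_cases ha : a = 0
  · exact ⟨0, by simpa [ha] using mul_nonneg (norm_nonneg (c 0)) (hw 0).le⟩
  by_cases hb : b = 0
  · exact ⟨0, by simpa [hb] using mul_nonneg (norm_nonneg (c 0)) (hw 0).le⟩
  obtain ⟨x₀, hax₀, hx₀, hax⟩ := exists_greatest_index_attaining_weightedSupNorm hw ha
  obtain ⟨y₀, hby₀, hy₀, hby⟩ := exists_greatest_index_attaining_weightedSupNorm hw hb
  set νa := weightedSupNorm w a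
  set νb := weightedSupNorm w b
  have hνa : 0 < νa := hx₀ ▸ mul_pos (norm_pos_iff.2 hax₀) (hw x₀)
  have hνb : 0 < νb := hy₀ ▸ mul_pos (norm_pos_iff.2 hby₀) (hw y₀)
  set κ₀ := x₀ + y₀
  have hlead : ‖t x₀ (κ₀ - x₀) * a x₀ * b (κ₀ - x₀)‖ * w κ₀ = νa * νb := by
    rw [norm_twistedTerm_mul_weight hw_add ht, add_sub_cancel_left, hx₀, hy₀]
  have hrest : ∀ x ≠ x₀, ‖t x (κ₀ - x) * a x * b (κ₀ - x)‖ * w κ₀ < νa * νb := by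
    intro x hx
    rw [norm_twistedTerm_mul_weight hw_add ht]
    have hax_le := norm_mul_weight_le_weightedSupNorm w a x
    have hbx_le := norm_mul_weight_le_weightedSupNorm w b (κ₀ - x)
    rcases hx.lt_or_gt with hlt | hgt
    · have hb_lt : ‖b (κ₀ - x)‖ * w (κ₀ - x) < νb := hby _ <| by
        simpa [κ₀] using sub_lt_sub_left hlt κ₀
      exact mul_lt_mul' hax_le hb_lt (mul_nonneg (norm_nonneg _) (hw _).le) hνa
    · exact mul_lt_mul_of_nonneg_of_pos (hax x hgt) hbx_le
        (mul_nonneg (norm_nonneg _) (hw _).le) hνb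
  refine ⟨κ₀, le_of_eq ?_⟩
  rw [hc κ₀, IsUltrametricDist.norm_sum_eq_of_forall_ne_norm_lt
    (Finsupp.mem_support_iff.2 hax₀) fun x _ hx => ?_, hlead]
  exact lt_of_mul_lt_mul_right (hlead ▸ hrest x hx) (hw κ₀).le

theorem weightedSupNorm_twistedConv [LinearOrder Γ] [IsOrderedAddMonoid Γ] :
    weightedSupNorm w c = weightedSupNorm w a * weightedSupNorm w b := by
  have hle := norm_twistedConv_mul_weight_le hw hw_add ht hc
  obtain ⟨κ, hκ⟩ := exists_weightedSupNorm_mul_le_norm_twistedConv_mul_weight hw hw_add ht hc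
  exact le_antisymm (ciSup_le hle) (hκ.trans (le_ciSup ⟨_, Set.forall_mem_range.2 hle⟩ κ))

end TwistedConvolution

theorem quantumTorus_regular_norm_multiplicative_general {K : Type*} [NormedField K]
    [IsUltrametricDist K] {d : ℕ} (q : Kˣ) (hq : ‖(q : K)‖ = 1)
    (φ : (Fin d → ℤ) → (Fin d → ℤ) → ℤ)
    (r : Fin d → ℝ) (hr : ∀ i, 0 < r i)
    (a b : (Fin d → ℤ) →₀ K)
    (c : (Fin d → ℤ) → K)
    (hc : ∀ κ : Fin d → ℤ, c κ =
      ∑ lm ∈ a.support, ((q ^ φ lm (κ - lm) : Kˣ) : K) * a lm * b (κ - lm)) :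
    (⨆ κ : Fin d → ℤ, ‖c κ‖ * ∏ i, r i ^ κ i) =
      (⨆ lm : Fin d → ℤ, ‖a lm‖ * ∏ i, r i ^ lm i) *
        (⨆ mu : Fin d → ℤ, ‖b mu‖ * ∏ i, r i ^ mu i) := by
  have hw : ∀ κ : Fin d → ℤ, 0 < ∏ i, r i ^ κ i :=
    fun κ => prod_pos fun i _ => zpow_pos (hr i) _
  have hw_add : ∀ κ μ : Fin d → ℤ, ∏ i, r i ^ (κ + μ) i = (∏ i, r i ^ κ i) * ∏ i, r i ^ μ i :=
    fun κ μ => by simp only [Pi.add_apply, zpow_add₀ (hr _).ne', prod_mul_distrib]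
  have ht : ∀ x y, ‖((q ^ φ x y : Kˣ) : K)‖ = 1 := fun x y => by
    rw [Units.val_zpow_eq_zpow_val, norm_zpow, hq, one_zpow]
  -- the lexicographic order makes the lattice a linearly ordered group
  exact weightedSupNorm_twistedConv (Γ := Lex (Fin d → ℤ)) hw hw_add ht hc

/-- Multiplicativity of the norm `ν_r` on the algebra `A_q(T(L,φ))` of regular functions
on the quantum torus: elements are finitely supported coefficient functions
`(Fin d → ℤ) →₀ K` with product twisted by `q^{φ(λ,μ)}` (corresponding to
`e(λ)e(μ) = q^{φ(λ,μ)} e(λ+μ)`), and `ν_r(a) = sup_λ ‖a λ‖ ∏ᵢ r i ^ λ i`. -/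
theorem quantumTorus_regular_norm_multiplicative {K : Type*} [NormedField K]
    [IsUltrametricDist K] {d : ℕ} (q : Kˣ) (hq : ‖(q : K)‖ = 1)
    (φ : (Fin d → ℤ) → (Fin d → ℤ) → ℤ)
    (hskew : ∀ lm mu, φ lm mu = -φ mu lm)
    (haddl : ∀ l₁ l₂ mu, φ (l₁ + l₂) mu = φ l₁ mu + φ l₂ mu)
    (haddr : ∀ lm m₁ m₂, φ lm (m₁ + m₂) = φ lm m₁ + φ lm m₂)
    (r : Fin d → ℝ) (hr : ∀ i, 0 < r i)
    (a b : (Fin d → ℤ) →₀ K)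
    (c : (Fin d → ℤ) → K)
    (hc : ∀ κ : Fin d → ℤ, c κ =
      ∑ lm ∈ a.support, ((q ^ φ lm (κ - lm) : Kˣ) : K) * a lm * b (κ - lm)) :
    (⨆ κ : Fin d → ℤ, ‖c κ‖ * ∏ i, r i ^ κ i) =
      (⨆ lm : Fin d → ℤ, ‖a lm‖ * ∏ i, r i ^ lm i) *
        (⨆ mu : Fin d → ℤ, ‖b mu‖ * ∏ i, r i ^ mu i) :=
  quantumTorus_regular_norm_multiplicative_general q hq φ r hr a b c hc
end

section
/- Let K be a complete non-archimedean valuation field, q ∈ Kˣ a unit with ‖q‖ = 1, d a natural number, φ : (Fin d → ℤ) → (Fin d → ℤ) → ℤ a skew-symmetric biadditive form, and r : Fin d → ℝ with r(i) > 0 for all i. Let a, b : (Fin d → ℤ) → K satisfy the decay condition that ‖a(λ)‖·∏ᵢ r(i)^{λ(i)} → 0 and ‖b(λ)‖·∏ᵢ r(i)^{λ(i)} → 0 along the cofinite filter, and let c(κ) = Σ'_λ q^{φ(λ,κ−λ)}·a(λ)·b(κ−λ) be their twisted convolution. Then the norm ν_r(f) = ⨆_λ ‖f(λ)‖·∏ᵢ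 r(i)^{λ(i)} is multiplicative: ν_r(c) = ν_r(a)·ν_r(b). In other words, ν_r is a multiplicative norm on the algebra of analytic functions on the quantum torus of multiradius r, and hence defines a point of its Berkovich spectrum. -/
/-!
Write `α λ = ‖a λ‖ w λ` and `β μ = ‖b μ‖ w μ` for the weight `w λ = ∏ i, r i ^ λ i`. Both tend
to `0`, so they attain their maxima `A` and `B`, each on a finite set. Since `w` is multiplicative
and the twist has norm one, every term of the series for `c κ` has norm `α λ β (κ - λ) / w κ`, so
the ultrametric inequality gives `ν_r(c) ≤ A B`. For the reverse inequality, `ℤ^d` has unique sums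
(take lexicographically least maximisers): there are maximisers `λ₀` of `α` and `μ₀` of `β` such
that `λ₀ + μ₀` is the sum of no other pair of maximisers. In the series for `c (λ₀ + μ₀)` the term
`λ = λ₀` then strictly dominates all others, and a convergent ultrametric series with a strictly
dominant term has the norm of that term.
-/

open Filter Topology

theorem finite_setOf_le_of_tendsto_cofinite_zero {ι : Type*} {f : ι → ℝ}
    (hf : Tendsto f cofinite (𝓝 0)) {A : ℝ} (hA : 0 < A) : {i | A ≤ f i}.Finite := by
  simpa only [not_lt] using eventually_cofinite.1 (hf.eventually (gt_mem_nhds hA))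

theorem exists_forall_le_of_tendsto_cofinite_zero {ι : Type*} [Nonempty ι] {f : ι → ℝ}
    (hf : Tendsto f cofinite (𝓝 0)) (hf0 : ∀ i, 0 ≤ f i) : ∃ i, ∀ j, f j ≤ f i := by
  by_cases hpos : ∃ x, 0 < f x
  · obtain ⟨x, hx⟩ := hpos
    have hfin := finite_setOf_le_of_tendsto_cofinite_zero hf hx
    obtain ⟨i, hi, hmax⟩ := hfin.toFinset.exists_max_image f ⟨x, by simp⟩
    rw [Set.Finite.mem_toFinset, Set.mem_ofPred_eq] at hi
    refine ⟨i, fun j => ?_⟩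
    by_cases hj : f x ≤ f j
    · exact hmax j (by simpa using hj)
    · exact (not_le.1 hj).le.trans hi
  · push Not at hpos
    exact ⟨Classical.arbitrary ι, fun j => (hpos j).trans (hf0 _)⟩

theorem IsUltrametricDist.norm_tsum_eq_of_forall_norm_lt {ι E : Type*} [NormedAddCommGroup E]
    [IsUltrametricDist E] {t : ι → E} (ht : Summable t) {i₀ : ι}
    (h : ∀ i ≠ i₀, ‖t i‖ < ‖t i₀‖) : ‖∑' i, t i‖ = ‖t i₀‖ := by
  classical
  set s : ι → E := fun i => if i = i₀ then 0 else t i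
  have hs : Summable s := (ht.update i₀ 0).congr fun i => Function.update_apply t i₀ 0 i
  have : Nonempty ι := ⟨i₀⟩
  obtain ⟨i₁, hi₁⟩ := exists_forall_le_of_tendsto_cofinite_zero
    (tendsto_zero_iff_norm_tendsto_zero.1 hs.tendsto_cofinite_zero) fun _ => norm_nonneg _
  have hrest : ‖∑' i, s i‖ ≤ ‖s i₁‖ :=
    IsUltrametricDist.norm_tsum_le_of_forall_le_of_nonneg (norm_nonneg _) hi₁
  rw [ht.tsum_eq_add_tsum_ite i₀]
  by_cases h₁ : i₁ = i₀
  · have : ∑' i, s i = 0 := by simpa [s, h₁] using hrest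
    rw [this, add_zero]
  · have hlt : ‖∑' i, s i‖ < ‖t i₀‖ := hrest.trans_lt (by simpa [s, h₁] using h i₁ h₁)
    rw [IsUltrametricDist.norm_add_eq_max_of_norm_ne_norm hlt.ne', max_eq_left hlt.le]

section TwistedConvolution

variable {G K : Type*} [AddCommGroup G] [NormedField K] {w : G → ℝ} {τ : G → G → K} {a b : G → K}

/-- With `τ λ μ = q ^ φ λ μ`, this is the coefficient of `e(κ)` in `(Σ a(λ) e(λ)) (Σ b(μ) e(μ))`. -/
noncomputable def twistedConv (τ : G → G → K) (a b : G → K) (κ : G) : K :=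
  ∑' l, τ l (κ - l) * a l * b (κ - l)

theorem norm_twistedConv_term_mul_weight (hτ : ∀ l m, ‖τ l m‖ = 1)
    (hw : ∀ l m, w (l + m) = w l * w m) (κ l : G) :
    ‖τ l (κ - l) * a l * b (κ - l)‖ * w κ = ‖a l‖ * w l * (‖b (κ - l)‖ * w (κ - l)) := by
  rw [norm_mul, norm_mul, hτ, one_mul, ← add_sub_cancel l κ, hw, add_sub_cancel_left]
  ring

variable [IsUltrametricDist K]

theorem summable_twistedConv_term [CompleteSpace K] (hτ : ∀ l m, ‖τ l m‖ = 1)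
    (hw0 : ∀ l, 0 < w l) (hw : ∀ l m, w (l + m) = w l * w m)
    (ha : Tendsto (fun l => ‖a l‖ * w l) cofinite (𝓝 0))
    (hb : Tendsto (fun m => ‖b m‖ * w m) cofinite (𝓝 0)) (κ : G) :
    Summable fun l => τ l (κ - l) * a l * b (κ - l) := by
  obtain ⟨B, hB⟩ := hb.bddAbove_range_of_cofinite
  refine NonarchimedeanAddGroup.summable_of_tendsto_cofinite_zero
    (tendsto_zero_iff_norm_tendsto_zero.2 ?_)
  refine squeeze_zero (fun _ => norm_nonneg _) (fun l => ?_) (by simpa using ha.mul_const (B / w κ))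
  rw [← mul_div_assoc, le_div_iff₀ (hw0 κ), norm_twistedConv_term_mul_weight hτ hw]
  exact mul_le_mul_of_nonneg_left (hB ⟨_, rfl⟩) (mul_nonneg (norm_nonneg _) (hw0 l).le)

theorem norm_twistedConv_mul_weight_le_s11 (hτ : ∀ l m, ‖τ l m‖ = 1)
    (hw0 : ∀ l, 0 < w l) (hw : ∀ l m, w (l + m) = w l * w m) {A B : ℝ}
    (hA : ∀ l, ‖a l‖ * w l ≤ A) (hB : ∀ m, ‖b m‖ * w m ≤ B) (κ : G) :
    ‖twistedConv τ a b κ‖ * w κ ≤ A * B := by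
  have hA0 : 0 ≤ A := (mul_nonneg (norm_nonneg _) (hw0 0).le).trans (hA 0)
  have hB0 : 0 ≤ B := (mul_nonneg (norm_nonneg _) (hw0 0).le).trans (hB 0)
  rw [← le_div_iff₀ (hw0 κ)]
  refine IsUltrametricDist.norm_tsum_le_of_forall_le_of_nonneg ?_ fun l => ?_
  · exact div_nonneg (mul_nonneg hA0 hB0) (hw0 κ).le
  · rw [le_div_iff₀ (hw0 κ), norm_twistedConv_term_mul_weight hτ hw]
    exact mul_le_mul (hA l) (hB _) (mul_nonneg (norm_nonneg _) (hw0 _).le) hA0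

theorem norm_twistedConv_mul_weight_eq_of_uniqueAdd (hτ : ∀ l m, ‖τ l m‖ = 1)
    (hw0 : ∀ l, 0 < w l) (hw : ∀ l m, w (l + m) = w l * w m) {A B : ℝ}
    (hA : ∀ l, ‖a l‖ * w l ≤ A) (hB : ∀ m, ‖b m‖ * w m ≤ B) (hA0 : 0 < A) (hB0 : 0 < B)
    {l₀ m₀ : G} (hl₀ : ‖a l₀‖ * w l₀ = A) (hm₀ : ‖b m₀‖ * w m₀ = B)
    (huniq : ∀ l m, ‖a l‖ * w l = A → ‖b m‖ * w m = B → l + m = l₀ + m₀ → l = l₀)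
    (hsum : Summable fun l => τ l (l₀ + m₀ - l) * a l * b (l₀ + m₀ - l)) :
    ‖twistedConv τ a b (l₀ + m₀)‖ * w (l₀ + m₀) = A * B := by
  set κ := l₀ + m₀
  have hterm₀ : ‖τ l₀ (κ - l₀) * a l₀ * b (κ - l₀)‖ * w κ = A * B := by
    rw [norm_twistedConv_term_mul_weight hτ hw, add_sub_cancel_left, hl₀, hm₀]
  rw [twistedConv, IsUltrametricDist.norm_tsum_eq_of_forall_norm_lt hsum (i₀ := l₀) ?_, hterm₀]
  intro l hl
  refine lt_of_mul_lt_mul_right ?_ (hw0 κ).le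
  rw [hterm₀, norm_twistedConv_term_mul_weight hτ hw]
  have hstrict : ‖a l‖ * w l < A ∨ ‖b (κ - l)‖ * w (κ - l) < B := by
    by_contra! h
    exact hl (huniq l (κ - l) ((hA l).antisymm h.1) ((hB _).antisymm h.2) (add_sub_cancel l κ))
  rcases hstrict with h | h
  · calc ‖a l‖ * w l * (‖b (κ - l)‖ * w (κ - l)) ≤ ‖a l‖ * w l * B :=
          mul_le_mul_of_nonneg_left (hB _) (mul_nonneg (norm_nonneg _) (hw0 l).le)
      _ < A * B := mul_lt_mul_of_pos_right h hB0
  · calc ‖a l‖ * w l * (‖b (κ - l)‖ * w (κ - l)) ≤ A * (‖b (κ - l)‖ * w (κ - l)) :=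
          mul_le_mul_of_nonneg_right (hA l) (mul_nonneg (norm_nonneg _) (hw0 _).le)
      _ < A * B := mul_lt_mul_of_pos_left h hA0

theorem exists_norm_twistedConv_mul_weight_eq [CompleteSpace K] [UniqueSums G]
    (hτ : ∀ l m, ‖τ l m‖ = 1) (hw0 : ∀ l, 0 < w l) (hw : ∀ l m, w (l + m) = w l * w m)
    (ha : Tendsto (fun l => ‖a l‖ * w l) cofinite (𝓝 0))
    (hb : Tendsto (fun m => ‖b m‖ * w m) cofinite (𝓝 0)) {A B : ℝ}
    (hA : ∀ l, ‖a l‖ * w l ≤ A) (hB : ∀ m, ‖b m‖ * w m ≤ B) (hA0 : 0 < A) (hB0 : 0 < B)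
    (hAa : ∃ l, ‖a l‖ * w l = A) (hBb : ∃ m, ‖b m‖ * w m = B) :
    ∃ κ, ‖twistedConv τ a b κ‖ * w κ = A * B := by
  have hSa : {l | ‖a l‖ * w l = A}.Finite :=
    (finite_setOf_le_of_tendsto_cofinite_zero ha hA0).subset fun _ h => h.ge
  have hSb : {m | ‖b m‖ * w m = B}.Finite :=
    (finite_setOf_le_of_tendsto_cofinite_zero hb hB0).subset fun _ h => h.ge
  obtain ⟨l₀, hl₀, m₀, hm₀, huniq⟩ := UniqueSums.uniqueAdd_of_nonempty
    (A := hSa.toFinset) (B := hSb.toFinset) (hSa.toFinset_nonempty.2 hAa) (hSb.toFinset_nonempty.2 hBb)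
  refine ⟨l₀ + m₀, norm_twistedConv_mul_weight_eq_of_uniqueAdd hτ hw0 hw hA hB hA0 hB0
    (by simpa using hl₀) (by simpa using hm₀) (fun l m hl hm hlm => ?_)
    (summable_twistedConv_term hτ hw0 hw ha hb _)⟩
  exact (huniq (by simpa using hl) (by simpa using hm) hlm).1

theorem iSup_norm_twistedConv_mul_weight [CompleteSpace K] [UniqueSums G]
    (hτ : ∀ l m, ‖τ l m‖ = 1) (hw0 : ∀ l, 0 < w l) (hw : ∀ l m, w (l + m) = w l * w m)
    (ha : Tendsto (fun l => ‖a l‖ * w l) cofinite (𝓝 0))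
    (hb : Tendsto (fun m => ‖b m‖ * w m) cofinite (𝓝 0)) :
    ⨆ κ, ‖twistedConv τ a b κ‖ * w κ = (⨆ l, ‖a l‖ * w l) * ⨆ m, ‖b m‖ * w m := by
  have hα0 : ∀ l, 0 ≤ ‖a l‖ * w l := fun l => mul_nonneg (norm_nonneg _) (hw0 l).le
  have hβ0 : ∀ m, 0 ≤ ‖b m‖ * w m := fun m => mul_nonneg (norm_nonneg _) (hw0 m).le
  obtain ⟨la, hla⟩ := exists_forall_le_of_tendsto_cofinite_zero ha hα0
  obtain ⟨lb, hlb⟩ := exists_forall_le_of_tendsto_cofinite_zero hb hβ0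
  rw [ciSup_eq_of_forall_le_of_forall_lt_exists_gt hla fun _ h => ⟨la, h⟩,
    ciSup_eq_of_forall_le_of_forall_lt_exists_gt hlb fun _ h => ⟨lb, h⟩]
  have hle := norm_twistedConv_mul_weight_le_s11 hτ hw0 hw hla hlb
  refine le_antisymm (ciSup_le hle) ?_
  rcases (hα0 la).eq_or_lt with hA | hA
  · rw [← hA, zero_mul]
    exact Real.iSup_nonneg fun κ => mul_nonneg (norm_nonneg _) (hw0 κ).le
  rcases (hβ0 lb).eq_or_lt with hB | hB
  · rw [← hB, mul_zero]
    exact Real.iSup_nonneg fun κ => mul_nonneg (norm_nonneg _) (hw0 κ).le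
  obtain ⟨κ, hκ⟩ :=
    exists_norm_twistedConv_mul_weight_eq hτ hw0 hw ha hb hla hlb hA hB ⟨la, rfl⟩ ⟨lb, rfl⟩
  exact le_ciSup_of_le ⟨_, Set.forall_mem_range.2 hle⟩ κ hκ.ge

end TwistedConvolution

theorem quantumTorus_analytic_norm_multiplicative_general {K : Type*} [NormedField K]
    [IsUltrametricDist K] [CompleteSpace K] {d : ℕ} (q : Kˣ) (hq : ‖(q : K)‖ = 1)
    (φ : (Fin d → ℤ) → (Fin d → ℤ) → ℤ)
    (r : Fin d → ℝ) (hr : ∀ i, 0 < r i)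
    (a b : (Fin d → ℤ) → K)
    (ha : Tendsto (fun lm : Fin d → ℤ => ‖a lm‖ * ∏ i, r i ^ lm i) cofinite (nhds 0))
    (hb : Tendsto (fun mu : Fin d → ℤ => ‖b mu‖ * ∏ i, r i ^ mu i) cofinite (nhds 0))
    (c : (Fin d → ℤ) → K)
    (hc : ∀ κ : Fin d → ℤ,
      c κ = ∑' lm : Fin d → ℤ, ((q ^ φ lm (κ - lm) : Kˣ) : K) * a lm * b (κ - lm)) :
    (⨆ κ : Fin d → ℤ, ‖c κ‖ * ∏ i, r i ^ κ i) =
      (⨆ lm : Fin d → ℤ, ‖a lm‖ * ∏ i, r i ^ lm i) *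
        (⨆ mu : Fin d → ℤ, ‖b mu‖ * ∏ i, r i ^ mu i) := by
  have hτ : ∀ l m, ‖((q ^ φ l m : Kˣ) : K)‖ = 1 := fun l m => by
    rw [Units.val_zpow_eq_zpow_val, norm_zpow, hq, one_zpow]
  have hw0 : ∀ l : Fin d → ℤ, 0 < ∏ i, r i ^ l i := fun l =>
    Finset.prod_pos fun i _ => zpow_pos (hr i) _
  have hw : ∀ l m : Fin d → ℤ, ∏ i, r i ^ (l + m) i = (∏ i, r i ^ l i) * ∏ i, r i ^ m i :=
    fun l m => by simp only [Pi.add_apply, zpow_add₀ (hr _).ne', Finset.prod_mul_distrib]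
  obtain rfl : c = twistedConv (fun l m => ((q ^ φ l m : Kˣ) : K)) a b := funext hc
  exact iSup_norm_twistedConv_mul_weight hτ hw0 hw ha hb

/-- The norm `ν_r` on the algebra of analytic functions on the quantum torus of
multiradius `r` is multiplicative (hence defines a point of the Berkovich spectrum):
for coefficient functions `a, b` satisfying the decay condition, the twisted
convolution `c` satisfies `ν_r(c) = ν_r(a) · ν_r(b)`. -/
theorem quantumTorus_analytic_norm_multiplicative {K : Type*} [NormedField K]
    [IsUltrametricDist K] [CompleteSpace K] {d : ℕ} (q : Kˣ) (hq : ‖(q : K)‖ = 1)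
    (φ : (Fin d → ℤ) → (Fin d → ℤ) → ℤ)
    (hskew : ∀ lm mu, φ lm mu = -φ mu lm)
    (haddl : ∀ l₁ l₂ mu, φ (l₁ + l₂) mu = φ l₁ mu + φ l₂ mu)
    (haddr : ∀ lm m₁ m₂, φ lm (m₁ + m₂) = φ lm m₁ + φ lm m₂)
    (r : Fin d → ℝ) (hr : ∀ i, 0 < r i)
    (a b : (Fin d → ℤ) → K)
    (ha : Tendsto (fun lm : Fin d → ℤ => ‖a lm‖ * ∏ i, r i ^ lm i) cofinite (nhds 0))
    (hb : Tendsto (fun mu : Fin d → ℤ => ‖b mu‖ * ∏ i, r i ^ mu i) cofinite (nhds 0))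
    (c : (Fin d → ℤ) → K)
    (hc : ∀ κ : Fin d → ℤ,
      c κ = ∑' lm : Fin d → ℤ, ((q ^ φ lm (κ - lm) : Kˣ) : K) * a lm * b (κ - lm)) :
    (⨆ κ : Fin d → ℤ, ‖c κ‖ * ∏ i, r i ^ κ i) =
      (⨆ lm : Fin d → ℤ, ‖a lm‖ * ∏ i, r i ^ lm i) *
        (⨆ mu : Fin d → ℤ, ‖b mu‖ * ∏ i, r i ^ mu i) :=
  quantumTorus_analytic_norm_multiplicative_general q hq φ r hr a b ha hb c hc
end

section
/- Let K be a non-archimedean valuation field, q ∈ Kˣ a unit with ‖q‖ = 1 and ‖1 − q‖ < 1, d a natural number, ρ : Fin d → ℝ with ρ(i) > 0 for all i, and a : Fin d → K with ‖a(i)‖ ≤ ρ(i) for all i. Let b be a K-basis of the quantum polynomial algebra K[T₁,…,T_d]_q indexed by multi-indices l ∈ (Fin d →₀ ℕ) such that b(l) = (T₁ − a₁)^{l(1)}·(T₂ − a₂)^{l(2)}⋯(T_d − a_d)^{l(d)} (ordered products, factors in increasing order of index). Define ν_{a,ρ}(f) = ⨆_l ‖(coordinate of f in the basis b at index l)‖·∏ᵢ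 ρ(i)^{l(i)} (this supremum is a maximum over the finite support). Then ν_{a,ρ} is multiplicative: ν_{a,ρ}(f·g) = ν_{a,ρ}(f)·ν_{a,ρ}(g) for all f, g in K[T₁,…,T_d]_q; in particular ν_{a,ρ} defines a multiplicative seminorm on the quantum polynomial algebra. -/
/-- The defining relations of the quantum polynomial algebra: `Tᵢ Tⱼ = q · Tⱼ Tᵢ`
for `i < j`. -/
inductive QuantumPolyRel (K : Type*) [Field K] (q : Kˣ) (d : ℕ) :
    FreeAlgebra K (Fin d) → FreeAlgebra K (Fin d) → Prop
  | comm (i j : Fin d) (h : i < j) :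
      QuantumPolyRel K q d (FreeAlgebra.ι K i * FreeAlgebra.ι K j)
        ((q : K) • (FreeAlgebra.ι K j * FreeAlgebra.ι K i))

/-- The quantum polynomial algebra `K[T₁,…,T_d]_q`. -/
abbrev QuantumPoly (K : Type*) [Field K] (q : Kˣ) (d : ℕ) : Type _ :=
  RingQuot (QuantumPolyRel K q d)

/-- The generator `Tᵢ` of the quantum polynomial algebra. -/
noncomputable def quantumVar (K : Type*) [Field K] (q : Kˣ) (d : ℕ) (i : Fin d) :
    QuantumPoly K q d :=
  RingQuot.mkAlgHom K (QuantumPolyRel K q d) (FreeAlgebra.ι K i)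

/-- The ordered product `(T₁ - a₁)^{l 1} (T₂ - a₂)^{l 2} ⋯ (T_d - a_d)^{l d}`, with
factors taken in increasing order of the index. -/
noncomputable def shiftedMonomial {K : Type*} [Field K] {q : Kˣ} {d : ℕ}
    (a : Fin d → K) (l : Fin d →₀ ℕ) : QuantumPoly K q d :=
  ((List.finRange d).map fun i =>
    (quantumVar K q d i - algebraMap K (QuantumPoly K q d) (a i)) ^ l i).prod

/-!
Reading off coordinates in `B` identifies `ν_{a,ρ}(f)` with the `ρ`-weighted Gauss norm of a
commutative polynomial in `K[X₁,…,X_d]`, and the weighted Gauss norm is multiplicative there: at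
the lexicographically largest monomials where `p` and `p'` attain their norms, the coefficient of
`p * p'` has a single dominant term.

It remains to compare the quantum product with the commutative one. With `Vᵢ = Tᵢ - aᵢ`, the
relation `V_j Vᵢ = q⁻¹ Vᵢ V_j + (q⁻¹ - 1)(aᵢ V_j + a_j Vᵢ + aᵢ a_j)` for `i < j` lets one sort any
word in the `Vᵢ` by adjacent swaps. Since `‖q⁻¹ - 1‖ = ‖1 - q‖` and `‖aᵢ‖ ≤ ρᵢ`, each swap only
adds terms of weighted norm at most `‖1 - q‖` times that of the word, so the product `B l * B m`
is `B (l + m)` up to such an error, and by bilinearity the coordinates of `f * g` differ from the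
commutative product by a term of norm at most `‖1 - q‖ ν(f) ν(g) < ν(f) ν(g)`, too small to change
the norm of the product in an ultrametric space.
-/

namespace MvPolynomial

section GaussNorm

variable {σ K : Type*} [Fintype σ] [NormedField K] (ρ : σ → ℝ)

def monomialWeight (k : σ →₀ ℕ) : ℝ := ∏ i, ρ i ^ k i

noncomputable def weightedGaussNorm (p : MvPolynomial σ K) : ℝ :=
  ⨆ k, ‖p.coeff k‖ * monomialWeight ρ k

def IsLexMaxNormMonomial [LinearOrder σ] (p : MvPolynomial σ K) (k : σ →₀ ℕ) : Prop :=
  k ∈ p.support ∧ weightedGaussNorm ρ p = ‖p.coeff k‖ * monomialWeight ρ k ∧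
    ∀ l ∈ p.support, weightedGaussNorm ρ p = ‖p.coeff l‖ * monomialWeight ρ l → toLex l ≤ toLex k

variable {ρ}

lemma monomialWeight_add (k l : σ →₀ ℕ) :
    monomialWeight ρ (k + l) = monomialWeight ρ k * monomialWeight ρ l := by
  simp [monomialWeight, pow_add, Finset.prod_mul_distrib]

lemma monomialWeight_single (i : σ) : monomialWeight ρ (Finsupp.single i 1) = ρ i := by
  classical
  rw [monomialWeight, Finset.prod_eq_single i (fun j _ hj => by simp [hj]) (by simp)]
  simp

lemma monomialWeight_pos (hρ : ∀ i, 0 < ρ i) (k : σ →₀ ℕ) : 0 < monomialWeight ρ k :=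
  Finset.prod_pos fun i _ => pow_pos (hρ i) _

lemma finite_range_norm_coeff_mul_monomialWeight (p : MvPolynomial σ K) :
    (Set.range fun k => ‖p.coeff k‖ * monomialWeight ρ k).Finite := by
  refine ((p.support.finite_toSet.image fun k => ‖p.coeff k‖ * monomialWeight ρ k).insert 0).subset
    ?_
  rintro _ ⟨k, rfl⟩
  by_cases hk : k ∈ p.support
  · exact Set.mem_insert_of_mem _ ⟨k, hk, rfl⟩
  · simp [notMem_support_iff.1 hk]

lemma norm_coeff_mul_monomialWeight_le (p : MvPolynomial σ K) (k : σ →₀ ℕ) :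
    ‖p.coeff k‖ * monomialWeight ρ k ≤ weightedGaussNorm ρ p :=
  le_ciSup (finite_range_norm_coeff_mul_monomialWeight p).bddAbove k

lemma weightedGaussNorm_le {p : MvPolynomial σ K} {r : ℝ}
    (h : ∀ k, ‖p.coeff k‖ * monomialWeight ρ k ≤ r) : weightedGaussNorm ρ p ≤ r :=
  ciSup_le h

lemma weightedGaussNorm_nonneg (hρ : ∀ i, 0 < ρ i) (p : MvPolynomial σ K) :
    0 ≤ weightedGaussNorm ρ p :=
  (mul_nonneg (norm_nonneg _) (monomialWeight_pos hρ 0).le).trans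
    (norm_coeff_mul_monomialWeight_le p 0)

@[simp]
lemma weightedGaussNorm_zero : weightedGaussNorm ρ (0 : MvPolynomial σ K) = 0 := by
  simp [weightedGaussNorm]

lemma weightedGaussNorm_neg (p : MvPolynomial σ K) :
    weightedGaussNorm ρ (-p) = weightedGaussNorm ρ p := by
  simp [weightedGaussNorm]

lemma weightedGaussNorm_smul_le (c : K) (p : MvPolynomial σ K) :
    weightedGaussNorm ρ (c • p) ≤ ‖c‖ * weightedGaussNorm ρ p :=
  weightedGaussNorm_le fun k => by
    rw [coeff_smul, smul_eq_mul, norm_mul, mul_assoc]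
    exact mul_le_mul_of_nonneg_left (norm_coeff_mul_monomialWeight_le p k) (norm_nonneg c)

lemma weightedGaussNorm_smul_le_of_le (hρ : ∀ i, 0 < ρ i) {c : K} {p : MvPolynomial σ K}
    {r s : ℝ} (hc : ‖c‖ ≤ r) (hp : weightedGaussNorm ρ p ≤ s) :
    weightedGaussNorm ρ (c • p) ≤ r * s :=
  (weightedGaussNorm_smul_le c p).trans
    (mul_le_mul hc hp (weightedGaussNorm_nonneg hρ p) ((norm_nonneg c).trans hc))

lemma weightedGaussNorm_monomial_le (hρ : ∀ i, 0 < ρ i) (k : σ →₀ ℕ) (c : K) :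
    weightedGaussNorm ρ (monomial k c) ≤ ‖c‖ * monomialWeight ρ k := by
  classical
  refine weightedGaussNorm_le fun l => ?_
  rw [coeff_monomial]
  split_ifs with h
  · rw [h]
  · simpa using mul_nonneg (norm_nonneg c) (monomialWeight_pos hρ k).le

lemma exists_isLexMaxNormMonomial [LinearOrder σ] (hρ : ∀ i, 0 < ρ i) {p : MvPolynomial σ K}
    (hp : p ≠ 0) : ∃ k, IsLexMaxNormMonomial ρ p k := by
  obtain ⟨k, hk, hmax⟩ := p.support.exists_max_image
    (fun l => toLex (‖p.coeff l‖ * monomialWeight ρ l, toLex l)) (support_nonempty.2 hp)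
  have hle : ∀ l ∈ p.support, ‖p.coeff l‖ * monomialWeight ρ l ≤ ‖p.coeff k‖ * monomialWeight ρ k :=
    fun l hl => (Prod.Lex.le_iff.1 (hmax l hl)).elim le_of_lt fun h => h.1.le
  have hNk : weightedGaussNorm ρ p = ‖p.coeff k‖ * monomialWeight ρ k := by
    refine le_antisymm (weightedGaussNorm_le fun l => ?_) (norm_coeff_mul_monomialWeight_le p k)
    by_cases hl : l ∈ p.support
    · exact hle l hl
    · simpa [notMem_support_iff.1 hl] using
        mul_nonneg (norm_nonneg (p.coeff k)) (monomialWeight_pos hρ k).le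
  refine ⟨k, hk, hNk, fun l hl heq => ?_⟩
  exact ((Prod.Lex.le_iff.1 (hmax l hl)).resolve_left (hNk ▸ heq).symm.not_lt).2

lemma norm_coeff_mul_coeff_lt_of_isLexMaxNormMonomial [LinearOrder σ] (hρ : ∀ i, 0 < ρ i)
    {p p' : MvPolynomial σ K} {k k' l l' : σ →₀ ℕ} (hk : IsLexMaxNormMonomial ρ p k)
    (hk' : IsLexMaxNormMonomial ρ p' k') (hsum : l + l' = k + k') (hne : (l, l') ≠ (k, k')) :
    ‖p.coeff l * p'.coeff l'‖ < ‖p.coeff k * p'.coeff k'‖ := by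
  obtain ⟨hks, hNk, hkmax⟩ := hk
  obtain ⟨hks', hNk', hk'max⟩ := hk'
  have hkk' : 0 < ‖p.coeff k * p'.coeff k'‖ :=
    norm_pos_iff.2 (mul_ne_zero (mem_support_iff.1 hks) (mem_support_iff.1 hks'))
  by_cases hl : l ∈ p.support; swap
  · simpa [notMem_support_iff.1 hl] using hkk'
  by_cases hl' : l' ∈ p'.support; swap
  · simpa [notMem_support_iff.1 hl'] using hkk'
  have hvl := norm_coeff_mul_monomialWeight_le (ρ := ρ) p l
  have hvl' := norm_coeff_mul_monomialWeight_le (ρ := ρ) p' l'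
  have hlt : ‖p.coeff l‖ * monomialWeight ρ l * (‖p'.coeff l'‖ * monomialWeight ρ l') <
      weightedGaussNorm ρ p * weightedGaussNorm ρ p' := by
    have hN : 0 < weightedGaussNorm ρ p := hNk ▸ mul_pos (norm_pos_iff.2 (mem_support_iff.1 hks))
      (monomialWeight_pos hρ k)
    have hN' : 0 < weightedGaussNorm ρ p' := hNk' ▸ mul_pos
      (norm_pos_iff.2 (mem_support_iff.1 hks')) (monomialWeight_pos hρ k')
    rcases hvl.lt_or_eq with hlt | heq
    · exact mul_lt_mul_of_lt_of_le_of_nonneg_of_pos hlt hvl'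
        (mul_nonneg (norm_nonneg _) (monomialWeight_pos hρ l).le) hN'
    rcases hvl'.lt_or_eq with hlt' | heq'
    · exact mul_lt_mul_of_le_of_lt_of_nonneg_of_pos hvl hlt'
        (mul_nonneg (norm_nonneg _) (monomialWeight_pos hρ l').le) hN
    obtain ⟨rfl, rfl⟩ := (add_eq_add_iff_eq_and_eq (hkmax l hl heq.symm)
      (hk'max l' hl' heq'.symm)).1 (congrArg toLex hsum)
    exact absurd rfl hne
  rw [hNk, hNk', mul_mul_mul_comm, mul_mul_mul_comm _ (monomialWeight ρ k), ← monomialWeight_add,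
    ← monomialWeight_add, hsum, ← norm_mul, ← norm_mul] at hlt
  exact lt_of_mul_lt_mul_right hlt (monomialWeight_pos hρ _).le

variable [IsUltrametricDist K]

lemma weightedGaussNorm_add_le (hρ : ∀ i, 0 < ρ i) (p p' : MvPolynomial σ K) :
    weightedGaussNorm ρ (p + p') ≤ max (weightedGaussNorm ρ p) (weightedGaussNorm ρ p') :=
  weightedGaussNorm_le fun k => by
    rw [coeff_add]
    calc ‖p.coeff k + p'.coeff k‖ * monomialWeight ρ k
        ≤ max ‖p.coeff k‖ ‖p'.coeff k‖ * monomialWeight ρ k :=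
          mul_le_mul_of_nonneg_right (IsUltrametricDist.norm_add_le_max _ _)
            (monomialWeight_pos hρ k).le
      _ ≤ _ := by
          rw [max_mul_of_nonneg _ _ (monomialWeight_pos hρ k).le]
          exact max_le_max (norm_coeff_mul_monomialWeight_le p k)
            (norm_coeff_mul_monomialWeight_le p' k)

lemma weightedGaussNorm_add_le_of_le (hρ : ∀ i, 0 < ρ i) {p p' : MvPolynomial σ K} {r : ℝ}
    (h : weightedGaussNorm ρ p ≤ r) (h' : weightedGaussNorm ρ p' ≤ r) :
    weightedGaussNorm ρ (p + p') ≤ r :=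
  (weightedGaussNorm_add_le hρ p p').trans (max_le h h')

lemma weightedGaussNorm_le_of_sub_monomial_le (hρ : ∀ i, 0 < ρ i) {θ : ℝ} (hθ : θ ≤ 1)
    {p : MvPolynomial σ K} {k : σ →₀ ℕ}
    (h : weightedGaussNorm ρ (p - monomial k 1) ≤ θ * monomialWeight ρ k) :
    weightedGaussNorm ρ p ≤ monomialWeight ρ k := by
  rw [← sub_add_cancel p (monomial k 1)]
  refine weightedGaussNorm_add_le_of_le hρ
    (h.trans (mul_le_of_le_one_left (monomialWeight_pos hρ k).le hθ)) ?_
  simpa using weightedGaussNorm_monomial_le hρ k (1 : K)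

lemma weightedGaussNorm_sum_le (hρ : ∀ i, 0 < ρ i) {ι : Type*} (s : Finset ι)
    (p : ι → MvPolynomial σ K) {r : ℝ} (hr : 0 ≤ r) (h : ∀ i ∈ s, weightedGaussNorm ρ (p i) ≤ r) :
    weightedGaussNorm ρ (∑ i ∈ s, p i) ≤ r := by
  classical
  induction s using Finset.induction_on with
  | empty => simpa using hr
  | insert i s hi ih =>
    rw [Finset.sum_insert hi]
    exact weightedGaussNorm_add_le_of_le hρ (h i (Finset.mem_insert_self i s))
      (ih fun j hj => h j (Finset.mem_insert_of_mem hj))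

lemma weightedGaussNorm_eq_of_weightedGaussNorm_sub_le (hρ : ∀ i, 0 < ρ i) {θ : ℝ} (hθ : θ < 1)
    {p p' : MvPolynomial σ K}
    (h : weightedGaussNorm ρ (p - p') ≤ θ * weightedGaussNorm ρ p') :
    weightedGaussNorm ρ p = weightedGaussNorm ρ p' := by
  have hp := weightedGaussNorm_add_le hρ (p - p') p'
  have hp' := weightedGaussNorm_add_le hρ p (p' - p)
  rw [sub_add_cancel] at hp
  rw [add_sub_cancel, ← neg_sub, weightedGaussNorm_neg] at hp'
  have hp'_nonneg := weightedGaussNorm_nonneg hρ p'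
  have hsub : weightedGaussNorm ρ (p - p') ≤ weightedGaussNorm ρ p' :=
    h.trans (mul_le_of_le_one_left hp'_nonneg hθ.le)
  refine le_antisymm (hp.trans (max_le hsub le_rfl)) ?_
  rcases le_max_iff.1 hp' with h' | h'
  · exact h'
  · nlinarith [weightedGaussNorm_nonneg hρ p]

lemma weightedGaussNorm_mul_le (hρ : ∀ i, 0 < ρ i) (p p' : MvPolynomial σ K) :
    weightedGaussNorm ρ (p * p') ≤ weightedGaussNorm ρ p * weightedGaussNorm ρ p' := by
  classical
  refine weightedGaussNorm_le fun k => ?_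
  have hk := monomialWeight_pos hρ k
  rw [coeff_mul, ← le_div_iff₀ hk]
  refine IsUltrametricDist.norm_sum_le_of_forall_le_of_nonneg
    (div_nonneg (mul_nonneg (weightedGaussNorm_nonneg hρ p) (weightedGaussNorm_nonneg hρ p')) hk.le)
    fun x hx => ?_
  rw [le_div_iff₀ hk, ← Finset.HasAntidiagonal.mem_antidiagonal.1 hx, monomialWeight_add, norm_mul,
    mul_mul_mul_comm]
  exact mul_le_mul (norm_coeff_mul_monomialWeight_le p x.1)
    (norm_coeff_mul_monomialWeight_le p' x.2)
    (mul_nonneg (norm_nonneg _) (monomialWeight_pos hρ _).le) (weightedGaussNorm_nonneg hρ p)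

open Finset.HasAntidiagonal in
lemma weightedGaussNorm_mul [LinearOrder σ] (hρ : ∀ i, 0 < ρ i) (p p' : MvPolynomial σ K) :
    weightedGaussNorm ρ (p * p') = weightedGaussNorm ρ p * weightedGaussNorm ρ p' := by
  classical
  refine le_antisymm (weightedGaussNorm_mul_le hρ p p') ?_
  rcases eq_or_ne p 0 with rfl | hp
  · simp
  rcases eq_or_ne p' 0 with rfl | hp'
  · simp
  obtain ⟨k, hk⟩ := exists_isLexMaxNormMonomial hρ hp
  obtain ⟨k', hk'⟩ := exists_isLexMaxNormMonomial hρ hp'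
  have hdom : ∀ x ∈ antidiagonal (k + k'), x ≠ (k, k') →
      ‖p.coeff x.1 * p'.coeff x.2‖ < ‖p.coeff k * p'.coeff k'‖ := fun x hx hne =>
    norm_coeff_mul_coeff_lt_of_isLexMaxNormMonomial hρ hk hk' (mem_antidiagonal.1 hx) hne
  calc weightedGaussNorm ρ p * weightedGaussNorm ρ p'
      = ‖p.coeff k * p'.coeff k'‖ * monomialWeight ρ (k + k') := by
        rw [hk.2.1, hk'.2.1, norm_mul, monomialWeight_add]; ring
    _ = ‖(p * p').coeff (k + k')‖ * monomialWeight ρ (k + k') := by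
        rw [coeff_mul, IsNonarchimedean.apply_sum_eq_of_lt IsUltrametricDist.isNonarchimedean_norm
          (fun x => (norm_neg x).symm) (mem_antidiagonal.2 rfl : (k, k') ∈ antidiagonal (k + k'))
          hdom]
    _ ≤ weightedGaussNorm ρ (p * p') := norm_coeff_mul_monomialWeight_le _ _

end GaussNorm

end MvPolynomial

namespace Module.Basis

open MvPolynomial

section Field

variable {σ K A : Type*} [Field K] [Ring A] [Algebra K A]

noncomputable def toMvPolynomial (B : Basis (σ →₀ ℕ) K A) : A ≃ₗ[K] MvPolynomial σ K :=
  B.equiv (basisMonomials σ K) (Equiv.refl _)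

@[simp]
lemma toMvPolynomial_self (B : Basis (σ →₀ ℕ) K A) (l : σ →₀ ℕ) :
    B.toMvPolynomial (B l) = monomial l 1 := by
  simp [toMvPolynomial]

end Field

section Normed

variable {σ K A : Type*} [Fintype σ] [NormedField K] [IsUltrametricDist K] [Ring A] [Algebra K A]
  {ρ : σ → ℝ}

lemma weightedGaussNorm_toMvPolynomial_mul_sub_le (hρ : ∀ i, 0 < ρ i)
    (B : Basis (σ →₀ ℕ) K A) {θ : ℝ} (hθ : 0 ≤ θ)
    (hB : ∀ l m, weightedGaussNorm ρ (B.toMvPolynomial (B l * B m) - monomial (l + m) 1) ≤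
      θ * monomialWeight ρ (l + m)) (f g : A) :
    weightedGaussNorm ρ (B.toMvPolynomial (f * g) - B.toMvPolynomial f * B.toMvPolynomial g) ≤
      θ * (weightedGaussNorm ρ (B.toMvPolynomial f) *
        weightedGaussNorm ρ (B.toMvPolynomial g)) := by
  let D : A →ₗ[K] A →ₗ[K] MvPolynomial σ K :=
    (LinearMap.mul K A).compr₂ B.toMvPolynomial.toLinearMap -
      (LinearMap.mul K (MvPolynomial σ K)).compl₁₂ B.toMvPolynomial.toLinearMap
        B.toMvPolynomial.toLinearMap
  have hD : ∀ x y, D x y = B.toMvPolynomial (x * y) - B.toMvPolynomial x * B.toMvPolynomial y :=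
    fun _ _ => rfl
  have hθN := mul_nonneg hθ (mul_nonneg (weightedGaussNorm_nonneg hρ (B.toMvPolynomial f))
    (weightedGaussNorm_nonneg hρ (B.toMvPolynomial g)))
  rw [← hD, ← LinearMap.sum_repr_mul_repr_mul B B]
  refine weightedGaussNorm_sum_le hρ _ _ hθN fun l _ => weightedGaussNorm_sum_le hρ _ _ hθN
    fun m _ => ?_
  beta_reduce
  rw [hD, toMvPolynomial_self, toMvPolynomial_self, monomial_mul, one_mul]
  refine (weightedGaussNorm_smul_le_of_le hρ le_rfl
    (weightedGaussNorm_smul_le_of_le hρ le_rfl (hB l m))).trans ?_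
  calc ‖B.repr f l‖ * (‖B.repr g m‖ * (θ * monomialWeight ρ (l + m)))
      = θ * ((‖B.repr f l‖ * monomialWeight ρ l) * (‖B.repr g m‖ * monomialWeight ρ m)) := by
        rw [monomialWeight_add]; ring
    _ ≤ _ := mul_le_mul_of_nonneg_left
        (mul_le_mul (norm_coeff_mul_monomialWeight_le (B.toMvPolynomial f) l)
          (norm_coeff_mul_monomialWeight_le (B.toMvPolynomial g) m)
          (mul_nonneg (norm_nonneg _) (monomialWeight_pos hρ m).le)
          (weightedGaussNorm_nonneg hρ _)) hθ

end Normed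

end Module.Basis

lemma norm_inv_sub_one_of_norm_eq_one {K : Type*} [NormedField K] {x : K} (hx : ‖x‖ = 1) :
    ‖x⁻¹ - 1‖ = ‖1 - x‖ := by
  have hx0 : x ≠ 0 := norm_ne_zero_iff.1 (hx.symm ▸ one_ne_zero)
  rw [show x⁻¹ - 1 = x⁻¹ * (1 - x) by rw [mul_sub, mul_one, inv_mul_cancel₀ hx0], norm_mul,
    norm_inv, hx, inv_one, one_mul]

namespace List

variable {α : Type*} [LinearOrder α]

def inversions : List α → ℕ
  | [] => 0
  | x :: t => t.countP (· < x) + inversions t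

lemma inversions_append (u v : List α) :
    inversions (u ++ v) = inversions u + (u.map fun x => v.countP (· < x)).sum + inversions v := by
  induction u with
  | nil => simp [inversions]
  | cons x t ih =>
    simp only [cons_append, inversions, ih, map_cons, sum_cons, countP_append]
    omega

lemma inversions_append_cons_cons {i j : α} (h : i < j) (u v : List α) :
    inversions (u ++ j :: i :: v) = inversions (u ++ i :: j :: v) + 1 := by
  have hperm : ∀ x, (j :: i :: v).countP (· < x) = (i :: j :: v).countP (· < x) :=
    fun x => ((Perm.swap i j v).countP_eq _)
  have hswap : inversions (j :: i :: v) = inversions (i :: j :: v) + 1 := by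
    simp only [inversions, h, decide_true, countP_cons_of_pos, not_lt.2 h.le, decide_false,
      Bool.false_eq_true, not_false_eq_true, countP_cons_of_neg]
    omega
  rw [inversions_append, inversions_append, hswap]
  simp only [hperm]
  omega

lemma exists_eq_append_cons_cons_of_not_pairwise {w : List α} (hw : ¬ w.Pairwise (· ≤ ·)) :
    ∃ u i j v, w = u ++ j :: i :: v ∧ i < j := by
  rw [← isChain_iff_pairwise, isChain_iff_forall_rel_of_append_cons_cons] at hw
  push Not at hw
  obtain ⟨j, i, u, v, hw, hij⟩ := hw
  exact ⟨u, i, j, v, hw, hij⟩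

end List

namespace QuantumPoly

open MvPolynomial

section Words

variable {K : Type*} [Field K] {d : ℕ} (q : Kˣ) (a : Fin d → K)

lemma quantumVar_mul_quantumVar_of_lt {i j : Fin d} (h : i < j) :
    quantumVar K q d i * quantumVar K q d j =
      (q : K) • (quantumVar K q d j * quantumVar K q d i) := by
  simpa [quantumVar] using RingQuot.mkAlgHom_rel K (QuantumPolyRel.comm (K := K) (q := q) i j h)

noncomputable def shiftedVar (i : Fin d) : QuantumPoly K q d :=
  quantumVar K q d i - algebraMap K (QuantumPoly K q d) (a i)

noncomputable def shiftedWord (w : List (Fin d)) : QuantumPoly K q d :=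
  (w.map (shiftedVar q a)).prod

lemma shiftedVar_mul_shiftedVar_of_lt {i j : Fin d} (h : i < j) :
    shiftedVar q a j * shiftedVar q a i =
      (q : K)⁻¹ • (shiftedVar q a i * shiftedVar q a j) + ((q : K)⁻¹ - 1) •
        (a i • shiftedVar q a j + a j • shiftedVar q a i + algebraMap K _ (a i * a j)) := by
  have hji : quantumVar K q d j * quantumVar K q d i =
      (q : K)⁻¹ • (quantumVar K q d i * quantumVar K q d j) := by
    rw [quantumVar_mul_quantumVar_of_lt q h, smul_smul, inv_mul_cancel₀ q.ne_zero, one_smul]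
  simp only [shiftedVar, sub_mul, mul_sub, Algebra.algebraMap_eq_smul_one, smul_mul_assoc,
    mul_smul_comm, one_mul, mul_one, hji]
  module

@[simp]
lemma shiftedWord_cons (i : Fin d) (w : List (Fin d)) :
    shiftedWord q a (i :: w) = shiftedVar q a i * shiftedWord q a w := by
  simp [shiftedWord]

@[simp]
lemma shiftedWord_append (u v : List (Fin d)) :
    shiftedWord q a (u ++ v) = shiftedWord q a u * shiftedWord q a v := by
  simp [shiftedWord]

lemma shiftedWord_append_cons_cons_of_lt {i j : Fin d} (h : i < j) (u v : List (Fin d)) :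
    shiftedWord q a (u ++ j :: i :: v) =
      (q : K)⁻¹ • shiftedWord q a (u ++ i :: j :: v) + ((q : K)⁻¹ - 1) •
        (a i • shiftedWord q a (u ++ j :: v) + a j • shiftedWord q a (u ++ i :: v) +
          (a i * a j) • shiftedWord q a (u ++ v)) := by
  simp only [shiftedWord_append, shiftedWord_cons, ← mul_assoc _ (shiftedVar q a i),
    shiftedVar_mul_shiftedVar_of_lt q a h, Algebra.algebraMap_eq_smul_one]
  simp only [mul_add, add_mul, mul_smul_comm, smul_mul_assoc, one_mul, mul_assoc, smul_add]

noncomputable def wordDegree (w : List (Fin d)) : Fin d →₀ ℕ := Multiset.toFinsupp w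

@[simp]
lemma wordDegree_cons (i : Fin d) (w : List (Fin d)) :
    wordDegree (i :: w) = Finsupp.single i 1 + wordDegree w := by
  rw [wordDegree, wordDegree, ← Multiset.cons_coe, ← Multiset.singleton_add,
    Multiset.toFinsupp_add, Multiset.toFinsupp_singleton]

@[simp]
lemma wordDegree_append (u v : List (Fin d)) :
    wordDegree (u ++ v) = wordDegree u + wordDegree v := by
  simp [wordDegree, ← Multiset.coe_add]

def sortedWord (l : Fin d →₀ ℕ) : List (Fin d) :=
  (List.finRange d).flatMap fun i => List.replicate (l i) i

lemma shiftedWord_sortedWord (l : Fin d →₀ ℕ) :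
    shiftedWord q a (sortedWord l) = shiftedMonomial (q := q) a l := by
  rw [shiftedWord, sortedWord, List.map_flatMap]
  simp only [List.flatMap_def, List.prod_flatten, List.map_map, Function.comp_def,
    List.map_replicate, List.prod_replicate, shiftedMonomial, shiftedVar]

lemma wordDegree_sortedWord (l : Fin d →₀ ℕ) : wordDegree (sortedWord l) = l := by
  ext k
  simp [wordDegree, sortedWord, List.count_flatMap, ← Fin.sum_univ_def, Function.comp_def,
    List.count_replicate]

lemma pairwise_sortedWord (l : Fin d →₀ ℕ) : (sortedWord l).Pairwise (· ≤ ·) := by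
  rw [sortedWord, List.pairwise_flatMap]
  refine ⟨fun i _ => List.pairwise_replicate.2 (Or.inr le_rfl), ?_⟩
  refine (List.pairwise_lt_finRange d).imp fun hij x hx y hy => ?_
  rw [List.eq_of_mem_replicate hx, List.eq_of_mem_replicate hy]
  exact hij.le

lemma eq_sortedWord_of_pairwise {w : List (Fin d)} (hw : w.Pairwise (· ≤ ·)) :
    w = sortedWord (wordDegree w) := by
  refine List.Perm.eq_of_pairwise' hw (pairwise_sortedWord _) ?_
  rw [← Multiset.coe_eq_coe]
  exact Multiset.toFinsupp.injective (wordDegree_sortedWord (wordDegree w)).symm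

variable {q a} {B : Module.Basis (Fin d →₀ ℕ) K (QuantumPoly K q d)}

lemma toMvPolynomial_shiftedWord_of_pairwise (hB : ∀ l, B l = shiftedMonomial a l)
    {w : List (Fin d)} (hw : w.Pairwise (· ≤ ·)) :
    B.toMvPolynomial (shiftedWord q a w) = monomial (wordDegree w) 1 := by
  rw [eq_sortedWord_of_pairwise hw, shiftedWord_sortedWord, ← hB,
    Module.Basis.toMvPolynomial_self, wordDegree_sortedWord]

end Words

section GaussNorm

variable {K : Type*} [NormedField K] [IsUltrametricDist K] {d : ℕ} {q : Kˣ} {a : Fin d → K}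
  {ρ : Fin d → ℝ} {B : Module.Basis (Fin d →₀ ℕ) K (QuantumPoly K q d)}

lemma weightedGaussNorm_swapCorrection_le (hρ : ∀ i, 0 < ρ i) (ha : ∀ i, ‖a i‖ ≤ ρ i)
    {u v : List (Fin d)} {i j : Fin d}
    (h₁ : weightedGaussNorm ρ (B.toMvPolynomial (shiftedWord q a (u ++ j :: v))) ≤
      monomialWeight ρ (wordDegree (u ++ j :: v)))
    (h₂ : weightedGaussNorm ρ (B.toMvPolynomial (shiftedWord q a (u ++ i :: v))) ≤
      monomialWeight ρ (wordDegree (u ++ i :: v)))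
    (h₃ : weightedGaussNorm ρ (B.toMvPolynomial (shiftedWord q a (u ++ v))) ≤
      monomialWeight ρ (wordDegree (u ++ v))) :
    weightedGaussNorm ρ (monomial (wordDegree (u ++ j :: i :: v)) 1 +
      a i • B.toMvPolynomial (shiftedWord q a (u ++ j :: v)) +
      a j • B.toMvPolynomial (shiftedWord q a (u ++ i :: v)) +
      (a i * a j) • B.toMvPolynomial (shiftedWord q a (u ++ v))) ≤
      monomialWeight ρ (wordDegree (u ++ j :: i :: v)) := by
  have hdeg : wordDegree (u ++ j :: i :: v) =
      wordDegree (u ++ v) + Finsupp.single i 1 + Finsupp.single j 1 := by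
    simp only [wordDegree_append, wordDegree_cons]; abel
  have hdeg₁ : wordDegree (u ++ j :: v) = wordDegree (u ++ v) + Finsupp.single j 1 := by
    simp only [wordDegree_append, wordDegree_cons]; abel
  have hdeg₂ : wordDegree (u ++ i :: v) = wordDegree (u ++ v) + Finsupp.single i 1 := by
    simp only [wordDegree_append, wordDegree_cons]; abel
  rw [hdeg₁] at h₁
  rw [hdeg₂] at h₂
  refine weightedGaussNorm_add_le_of_le hρ (weightedGaussNorm_add_le_of_le hρ
    (weightedGaussNorm_add_le_of_le hρ ?_ ?_) ?_) ?_
  · simpa using weightedGaussNorm_monomial_le hρ (wordDegree (u ++ j :: i :: v)) (1 : K)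
  all_goals
    simp only [hdeg, monomialWeight_add, monomialWeight_single] at h₁ h₂ ⊢
  · convert weightedGaussNorm_smul_le_of_le hρ (ha i) h₁ using 1; ring
  · convert weightedGaussNorm_smul_le_of_le hρ (ha j) h₂ using 1; ring
  · convert weightedGaussNorm_smul_le_of_le hρ
      ((norm_mul (a i) (a j)).trans_le (mul_le_mul (ha i) (ha j) (norm_nonneg _) (hρ i).le)) h₃
      using 1
    ring

theorem weightedGaussNorm_toMvPolynomial_shiftedWord_sub_le (hq : ‖(q : K)‖ = 1)
    (hq1 : ‖1 - (q : K)‖ ≤ 1) (hρ : ∀ i, 0 < ρ i) (ha : ∀ i, ‖a i‖ ≤ ρ i)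
    (hB : ∀ l, B l = shiftedMonomial a l) (w : List (Fin d)) :
    weightedGaussNorm ρ (B.toMvPolynomial (shiftedWord q a w) - monomial (wordDegree w) 1) ≤
      ‖1 - (q : K)‖ * monomialWeight ρ (wordDegree w) := by
  by_cases hw : w.Pairwise (· ≤ ·)
  · rw [toMvPolynomial_shiftedWord_of_pairwise hB hw, sub_self, weightedGaussNorm_zero]
    exact mul_nonneg (norm_nonneg _) (monomialWeight_pos hρ _).le
  obtain ⟨u, i, j, v, hw, hij⟩ := List.exists_eq_append_cons_cons_of_not_pairwise hw
  subst hw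
  set P := B.toMvPolynomial
  set m := wordDegree (u ++ j :: i :: v)
  have hqinv : ‖(q : K)⁻¹‖ = 1 := by rw [norm_inv, hq, inv_one]
  have hswap :=
    weightedGaussNorm_toMvPolynomial_shiftedWord_sub_le hq hq1 hρ ha hB (u ++ i :: j :: v)
  have h₁ := weightedGaussNorm_le_of_sub_monomial_le hρ hq1
    (weightedGaussNorm_toMvPolynomial_shiftedWord_sub_le hq hq1 hρ ha hB (u ++ j :: v))
  have h₂ := weightedGaussNorm_le_of_sub_monomial_le hρ hq1
    (weightedGaussNorm_toMvPolynomial_shiftedWord_sub_le hq hq1 hρ ha hB (u ++ i :: v))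
  have h₃ := weightedGaussNorm_le_of_sub_monomial_le hρ hq1
    (weightedGaussNorm_toMvPolynomial_shiftedWord_sub_le hq hq1 hρ ha hB (u ++ v))
  have hm0 : wordDegree (u ++ i :: j :: v) = m := by
    simp only [m, wordDegree_append, wordDegree_cons]; abel
  have hsplit : P (shiftedWord q a (u ++ j :: i :: v)) - monomial m 1 =
      (q : K)⁻¹ • (P (shiftedWord q a (u ++ i :: j :: v)) - monomial m 1) + ((q : K)⁻¹ - 1) •
        (monomial m 1 + a i • P (shiftedWord q a (u ++ j :: v)) +
          a j • P (shiftedWord q a (u ++ i :: v)) +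
          (a i * a j) • P (shiftedWord q a (u ++ v))) := by
    rw [shiftedWord_append_cons_cons_of_lt q a hij]
    simp only [map_add, map_smul]
    module
  rw [hsplit]
  refine weightedGaussNorm_add_le_of_le hρ ?_ (weightedGaussNorm_smul_le_of_le hρ
    (norm_inv_sub_one_of_norm_eq_one hq).le (weightedGaussNorm_swapCorrection_le hρ ha h₁ h₂ h₃))
  simpa [hqinv, hm0] using weightedGaussNorm_smul_le_of_le hρ hqinv.le hswap
termination_by (w.length, w.inversions)
decreasing_by
  all_goals simp_wf; subst_vars
  · rw [Prod.lex_iff]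
    refine Or.inr ⟨by simp, ?_⟩
    rw [List.inversions_append_cons_cons hij]
    omega
  all_goals exact Prod.Lex.left _ _ (by simp)

lemma weightedGaussNorm_toMvPolynomial_basis_mul_sub_le (hq : ‖(q : K)‖ = 1)
    (hq1 : ‖1 - (q : K)‖ ≤ 1) (hρ : ∀ i, 0 < ρ i) (ha : ∀ i, ‖a i‖ ≤ ρ i)
    (hB : ∀ l, B l = shiftedMonomial a l) (l m : Fin d →₀ ℕ) :
    weightedGaussNorm ρ (B.toMvPolynomial (B l * B m) - monomial (l + m) 1) ≤
      ‖1 - (q : K)‖ * monomialWeight ρ (l + m) := by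
  simpa [hB, ← shiftedWord_sortedWord, wordDegree_sortedWord] using
    weightedGaussNorm_toMvPolynomial_shiftedWord_sub_le hq hq1 hρ ha hB
      (sortedWord l ++ sortedWord m)

end GaussNorm

end QuantumPoly

/-- Let `K` be a non-archimedean valuation field, `q` a unit with `‖q‖ = 1` and
`‖1 - q‖ < 1`, `ρᵢ > 0` and `‖aᵢ‖ ≤ ρᵢ`. Expanding elements of `K[T₁,…,T_d]_q` in the
basis of ordered products `(T₁-a₁)^{l 1} ⋯ (T_d-a_d)^{l d}`, the seminorm
`ν_{a,ρ}(f) = ⨆_l ‖coeff of f at l‖ ∏ᵢ ρᵢ^{l i}` is multiplicative. -/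
theorem quantumPoly_nu_multiplicative {K : Type*} [NormedField K] [IsUltrametricDist K]
    {d : ℕ} (q : Kˣ) (hq : ‖(q : K)‖ = 1) (hq1 : ‖1 - (q : K)‖ < 1)
    (ρ : Fin d → ℝ) (hρ : ∀ i, 0 < ρ i)
    (a : Fin d → K) (ha : ∀ i, ‖a i‖ ≤ ρ i)
    (B : Module.Basis (Fin d →₀ ℕ) K (QuantumPoly K q d))
    (hB : ∀ l : Fin d →₀ ℕ, B l = shiftedMonomial (q := q) a l)
    (f g : QuantumPoly K q d) :
    (⨆ l : Fin d →₀ ℕ, ‖B.repr (f * g) l‖ * ∏ i, ρ i ^ l i) =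
      (⨆ l : Fin d →₀ ℕ, ‖B.repr f l‖ * ∏ i, ρ i ^ l i) *
        (⨆ l : Fin d →₀ ℕ, ‖B.repr g l‖ * ∏ i, ρ i ^ l i) := by
  change MvPolynomial.weightedGaussNorm ρ (B.toMvPolynomial (f * g)) =
    MvPolynomial.weightedGaussNorm ρ (B.toMvPolynomial f) *
      MvPolynomial.weightedGaussNorm ρ (B.toMvPolynomial g)
  have hdefect := B.weightedGaussNorm_toMvPolynomial_mul_sub_le hρ (norm_nonneg _)
    (QuantumPoly.weightedGaussNorm_toMvPolynomial_basis_mul_sub_le hq hq1.le hρ ha hB) f g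
  rw [← MvPolynomial.weightedGaussNorm_mul hρ] at hdefect ⊢
  exact MvPolynomial.weightedGaussNorm_eq_of_weightedGaussNorm_sub_le hρ hq1 hdefect
end
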